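/- Let θ, z : (a,b) → ℝ be C¹ functions satisfying θ'(t) = √(1 - cos²θ(t)/z(t)²) > 0 and z'(t) = sin θ(t) on (a,b), with z > |cos θ|, and suppose θ(t) → 0 and z(t) → 1 as t → a⁺. Then sin²θ(t)/θ'(t)² → 0 as t → a⁺. -/

import Mathlib

/-!
Write `c = cos θ`. Since `θ'² = 1 - c²/z²`,
`sin²θ / θ'² = z² · (1 - c)/(z - c) · (1 + c)/(z + c)`.
As `t → a⁺` we have `z² → 1` and `(1 + c)/(z + c) → 1`, while `(1 - c)/(z - c)` is a `0/0` quotient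
whose derivatives are `sin θ · θ'` and `sin θ · (1 + θ')`; by L'Hôpital it tends to
`lim θ'/(1 + θ') = 0`. The factor `sin θ` cancels because `θ` increases from `0`, so `sin θ > 0`.
-/

open Filter Set Real
open scoped Topology

lemma one_sub_sq_div_sqrt_sq_eq {c z : ℝ} (h : |c| < z) :
    (1 - c ^ 2) / √(1 - c ^ 2 / z ^ 2) ^ 2 =
      z ^ 2 * ((1 - c) / (z - c) * ((1 + c) / (z + c))) := by
  obtain ⟨hlt, hgt⟩ := abs_lt.mp h
  have hz : 0 < z := by linarith
  have hsub : z - c ≠ 0 := by linarith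
  have hadd : z + c ≠ 0 := by linarith
  have hsq : z ^ 2 - c ^ 2 ≠ 0 := by
    rw [sq_sub_sq]; exact mul_ne_zero hadd hsub
  have hnonneg : 0 ≤ 1 - c ^ 2 / z ^ 2 := by
    rw [sub_nonneg, div_le_one₀ (pow_pos hz 2), ← sq_abs]
    exact pow_le_pow_left₀ (abs_nonneg c) h.le 2
  rw [sq_sqrt hnonneg]
  field_simp
  ring

lemma tendsto_cos_of_tendsto_zero {α : Type*} {l : Filter α} {θ : α → ℝ}
    (h : Tendsto θ l (𝓝 0)) : Tendsto (fun t => cos (θ t)) l (𝓝 1) := by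
  simpa [Function.comp_def] using (continuous_cos.tendsto 0).comp h

lemma tendsto_sqrt_one_sub_cos_sq_div_sq {α : Type*} {l : Filter α} {θ z : α → ℝ}
    (hθ : Tendsto θ l (𝓝 0)) (hz : Tendsto z l (𝓝 1)) :
    Tendsto (fun t => √(1 - cos (θ t) ^ 2 / z t ^ 2)) l (𝓝 0) := by
  have := (tendsto_const_nhds (x := (1 : ℝ)).sub
    (((tendsto_cos_of_tendsto_zero hθ).pow 2).div (hz.pow 2) (by norm_num))).sqrt
  simpa using this

lemma StrictMonoOn.lt_of_tendsto_nhdsGT {f : ℝ → ℝ} {a b L t : ℝ}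
    (hf : StrictMonoOn f (Ioo a b)) (hL : Tendsto f (𝓝[>] a) (𝓝 L)) (ht : t ∈ Ioo a b) :
    L < f t := by
  have hs : (a + t) / 2 ∈ Ioo a b := ⟨by linarith [ht.1], by linarith [ht.1, ht.2]⟩
  have hLs : L ≤ f ((a + t) / 2) := by
    refine le_of_tendsto hL ?_
    filter_upwards [Ioo_mem_nhdsGT hs.1] with u hu
    exact (hf ⟨hu.1, hu.2.trans hs.2⟩ hs hu.2).le
  exact hLs.trans_lt (hf hs ht (by linarith [ht.1]))

lemma tendsto_one_sub_cos_div_sub_cos {a : ℝ} {θ z θ' : ℝ → ℝ}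
    (hθ : ∀ᶠ t in 𝓝[>] a, HasDerivAt θ (θ' t) t)
    (hz : ∀ᶠ t in 𝓝[>] a, HasDerivAt z (sin (θ t)) t)
    (hsin : ∀ᶠ t in 𝓝[>] a, sin (θ t) ≠ 0)
    (hθlim : Tendsto θ (𝓝[>] a) (𝓝 0)) (hzlim : Tendsto z (𝓝[>] a) (𝓝 1))
    (hθ'lim : Tendsto θ' (𝓝[>] a) (𝓝 0)) :
    Tendsto (fun t => (1 - cos (θ t)) / (z t - cos (θ t))) (𝓝[>] a) (𝓝 0) := by
  have hcos := tendsto_cos_of_tendsto_zero hθlim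
  have hcos' : ∀ᶠ t in 𝓝[>] a, HasDerivAt (fun s => cos (θ s)) (-sin (θ t) * θ' t) t := by
    filter_upwards [hθ] with t ht using (hasDerivAt_cos (θ t)).comp t ht
  have hone_add : ∀ᶠ t in 𝓝[>] a, 1 + θ' t ≠ 0 := by
    have : Tendsto (fun t => 1 + θ' t) (𝓝[>] a) (𝓝 (1 + 0)) := tendsto_const_nhds.add hθ'lim
    exact this.eventually_ne (by norm_num)
  refine HasDerivAt.lhopital_zero_nhdsGT (f' := fun t => sin (θ t) * θ' t)
    (g' := fun t => sin (θ t) * (1 + θ' t)) ?_ ?_ ?_ ?_ ?_ ?_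
  · filter_upwards [hcos'] with t ht
    exact ((hasDerivAt_const t 1).sub ht).congr_deriv (by ring)
  · filter_upwards [hz, hcos'] with t hzt ht
    exact (hzt.sub ht).congr_deriv (by ring)
  · filter_upwards [hsin, hone_add] with t h₁ h₂ using mul_ne_zero h₁ h₂
  · simpa using (tendsto_const_nhds (x := (1 : ℝ))).sub hcos
  · simpa using hzlim.sub hcos
  · have : Tendsto (fun t => θ' t / (1 + θ' t)) (𝓝[>] a) (𝓝 (0 / (1 + 0))) :=
      hθ'lim.div (tendsto_const_nhds.add hθ'lim) (by norm_num)
    rw [zero_div] at this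
    refine this.congr' ?_
    filter_upwards [hsin] with t ht
    rw [mul_div_mul_left _ _ ht]

theorem sin_sq_div_deriv_sq_tendsto_zero (a b : ℝ) (θ z θ' : ℝ → ℝ)
    (hdom : ∀ t ∈ Set.Ioo a b, |Real.cos (θ t)| < z t)
    (hθ : ∀ t ∈ Set.Ioo a b, HasDerivAt θ (θ' t) t)
    (hθ'eq : ∀ t ∈ Set.Ioo a b,
      θ' t = Real.sqrt (1 - (Real.cos (θ t)) ^ 2 / (z t) ^ 2))
    (hθ'pos : ∀ t ∈ Set.Ioo a b, 0 < θ' t)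
    (hz' : ∀ t ∈ Set.Ioo a b, HasDerivAt z (Real.sin (θ t)) t)
    (hθlim : Filter.Tendsto θ (nhdsWithin a (Set.Ioo a b)) (nhds 0))
    (hzlim : Filter.Tendsto z (nhdsWithin a (Set.Ioo a b)) (nhds 1)) :
    Filter.Tendsto (fun t => (Real.sin (θ t)) ^ 2 / (θ' t) ^ 2)
      (nhdsWithin a (Set.Ioo a b)) (nhds 0) := by
  rcases le_or_gt b a with hba | hab
  · simp [Ioo_eq_empty_of_le hba]
  rw [nhdsWithin_Ioo_eq_nhdsGT hab] at *
  have hmem : Ioo a b ∈ 𝓝[>] a := Ioo_mem_nhdsGT hab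
  have hmono : StrictMonoOn θ (Ioo a b) :=
    strictMonoOn_of_hasDerivWithinAt_pos (convex_Ioo a b)
      (fun t ht => (hθ t ht).continuousAt.continuousWithinAt)
      (fun t ht => (hθ t (interior_subset ht)).hasDerivWithinAt)
      (fun t ht => hθ'pos t (interior_subset ht))
  have hsin : ∀ᶠ t in 𝓝[>] a, sin (θ t) ≠ 0 := by
    filter_upwards [hmem, hθlim.eventually (gt_mem_nhds pi_pos)] with t ht hπ
    exact (sin_pos_of_pos_of_lt_pi (hmono.lt_of_tendsto_nhdsGT hθlim ht) hπ).ne'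
  have hθ'lim : Tendsto θ' (𝓝[>] a) (𝓝 0) :=
    (tendsto_sqrt_one_sub_cos_sq_div_sq hθlim hzlim).congr'
      (eventually_of_mem hmem fun t ht => (hθ'eq t ht).symm)
  have hL := tendsto_one_sub_cos_div_sub_cos (eventually_of_mem hmem hθ)
    (eventually_of_mem hmem hz') hsin hθlim hzlim hθ'lim
  have hcos := tendsto_cos_of_tendsto_zero hθlim
  have hR : Tendsto (fun t => (1 + cos (θ t)) / (z t + cos (θ t))) (𝓝[>] a)
      (𝓝 ((1 + 1) / (1 + 1))) :=
    (tendsto_const_nhds.add hcos).div (hzlim.add hcos) (by norm_num)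
  have hprod := (hzlim.pow 2).mul (hL.mul hR)
  rw [zero_mul, mul_zero] at hprod
  refine hprod.congr' ?_
  filter_upwards [hmem] with t ht
  rw [hθ'eq t ht, sin_sq, one_sub_sq_div_sqrt_sq_eq (hdom t ht)]
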